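/- The conjunction connective is not definable from ¬, ∨, →, ⊤ in Gödel–Dummett logic: there is no formula θ in the fragment L(¬, ∨, →, ⊤; p, q) such that θ is forced at exactly the same nodes as p ∧ q in every connected finite Kripke model. In particular, in the 3-node connected model with b ≽ a, b ≽ c, a ⊩ p only, c ⊩ q only, b ⊩ p, q, no such θ agrees with p ∧ q (since b forces p∧q but neither a nor c does, while any ∧-free θ forced at b is forced at a or at c). -/

import Mathlib

/-! Take the model with two incomparable nodes `a ⊩ p` and `c ⊩ q` below a top node
`b ⊩ p, q`. By induction on an ∧-free formula, if it is forced at `b` then it is forced at `a`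
or at `c`: the only nontrivial case is `φ → ψ`, where counterexamples at nodes above `a` and
`c` would, by persistence, put `φ` at `b`, hence `ψ` at `b`, hence `ψ` at `a` or `c`.
Since `p ∧ q` holds at `b` but neither at `a` nor at `c`, no ∧-free formula is equivalent to it. -/

inductive Fm (α : Type) : Type where
  | top  : Fm α
  | atom : α → Fm α
  | neg  : Fm α → Fm α
  | and  : Fm α → Fm α → Fm α
  | or   : Fm α → Fm α → Fm α
  | imp  : Fm α → Fm α → Fm α

structure KripkeModel (α : Type) : Type 1 where
  K : Type
  le : K → K → Prop
  refl : ∀ k, le k k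
  trans : ∀ {a b c}, le a b → le b c → le a c
  antisymm : ∀ {a b}, le a b → le b a → a = b
  val : K → α → Prop
  persist : ∀ {k k' p}, le k k' → val k p → val k' p

def force {α : Type} (M : KripkeModel α) : M.K → Fm α → Prop
  | _, .top => True
  | k, .atom p => M.val k p
  | k, .neg φ => ∀ k', M.le k k' → ¬ force M k' φ
  | k, .and φ ψ => force M k φ ∧ force M k ψ
  | k, .or φ ψ => force M k φ ∨ force M k ψ
  | k, .imp φ ψ => ∀ k', M.le k k' → force M k' φ → force M k' ψ

/-- ∧-free formulas: built using only ¬, ∨, →, ⊤ and atoms. -/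
def NoAnd {α : Type} : Fm α → Prop
  | .top => True
  | .atom _ => True
  | .neg φ => NoAnd φ
  | .and _ _ => False
  | .or φ ψ => NoAnd φ ∧ NoAnd ψ
  | .imp φ ψ => NoAnd φ ∧ NoAnd ψ

/-- A Kripke model is connected when any two nodes above a common node are
comparable. -/
def Connected {α : Type} (M : KripkeModel α) : Prop :=
  ∀ k k' k'' : M.K, M.le k k' → M.le k k'' → M.le k' k'' ∨ M.le k'' k'

theorem force_mono {α : Type} (M : KripkeModel α) {k k' : M.K} (hk : M.le k k') :
    ∀ {φ : Fm α}, force M k φ → force M k' φ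
  | .top, _ => trivial
  | .atom _, h => M.persist hk h
  | .neg _, h => fun k'' hk'' => h k'' (M.trans hk hk'')
  | .and _ _, ⟨h₁, h₂⟩ => ⟨force_mono M hk h₁, force_mono M hk h₂⟩
  | .or _ _, .inl h => .inl (force_mono M hk h)
  | .or _ _, .inr h => .inr (force_mono M hk h)
  | .imp _ _, h => fun k'' hk'' => h k'' (M.trans hk hk'')

theorem NoAnd.force_or_force {α : Type} {M : KripkeModel α} {a b c : M.K}
    (ha : ∀ k, M.le a k → M.le k b) (hc : ∀ k, M.le c k → M.le k b)
    (hval : ∀ p, M.val b p → M.val a p ∨ M.val c p) :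
    ∀ {θ : Fm α}, NoAnd θ → force M b θ → force M a θ ∨ force M c θ
  | .top, _, _ => .inl trivial
  | .atom p, _, h => hval p h
  | .neg _, _, h => .inl fun k hk hφ => h b (M.refl b) (force_mono M (ha k hk) hφ)
  | .or _ _, ⟨hφ, hψ⟩, .inl h => (hφ.force_or_force ha hc hval h).imp .inl .inl
  | .or _ _, ⟨hφ, hψ⟩, .inr h => (hψ.force_or_force ha hc hval h).imp .inr .inr
  | .imp _ _, ⟨_, hψ⟩, h => by
    by_contra hfail
    simp only [force, not_or] at hfail
    push Not at hfail
    obtain ⟨⟨ka, hka, hφa, hψa⟩, ⟨kc, hkc, hφc, hψc⟩⟩ := hfail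
    have hψb := h b (M.refl b) (force_mono M (ha ka hka) hφa)
    rcases hψ.force_or_force ha hc hval hψb with hψ' | hψ'
    · exact hψa (force_mono M hka hψ')
    · exact hψc (force_mono M hkc hψ')

/-- The paper's model with `a, c, b` numbered `0, 1, 2`: node `i < 2` forces only the atom `i`. -/
abbrev veeModel : KripkeModel (Fin 2) where
  K := Fin 3
  le x y := x = y ∨ y = 2
  refl _ := .inl rfl
  trans := by rintro a b c (rfl | rfl) (rfl | rfl) <;> simp
  antisymm := by rintro a b (rfl | rfl) (h | rfl) <;> simp_all
  val k p := k = 2 ∨ k.val = p.val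
  persist := by rintro k k' p (rfl | rfl) h <;> simp_all

theorem veeModel_connected : Connected veeModel := by
  rintro k k' k'' (rfl | rfl) (rfl | rfl) <;> simp

theorem NoAnd.force_veeModel {θ : Fm (Fin 2)} (hθ : NoAnd θ) (h : force veeModel 2 θ) :
    force veeModel 0 θ ∨ force veeModel 1 θ :=
  hθ.force_or_force (by rintro k (rfl | rfl) <;> simp) (by rintro k (rfl | rfl) <;> simp)
    (fun p _ => by fin_cases p <;> simp) h

/-- Conjunction is not definable from ¬, ∨, →, ⊤ in Gödel–Dummett logic: no
∧-free formula in the atoms p = 0, q = 1 is forced at exactly the same nodes as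
p ∧ q in every connected finite Kripke model. -/
theorem and_not_definable_GDL :
    ¬ ∃ θ : Fm (Fin 2), NoAnd θ ∧
      ∀ (M : KripkeModel (Fin 2)), Fintype M.K → Connected M →
        ∀ k : M.K, (force M k θ ↔ force M k (Fm.and (Fm.atom 0) (Fm.atom 1))) := by
  rintro ⟨θ, hθ, hdef⟩
  have hdef := hdef veeModel (inferInstanceAs (Fintype (Fin 3))) veeModel_connected
  rcases hθ.force_veeModel ((hdef 2).2 ⟨.inl rfl, .inl rfl⟩) with h | h
  · simpa [force] using (hdef 0).1 h
  · simpa [force] using (hdef 1).1 h
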